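/- Uniqueness of the optimal two-level allocation under strict monotonicity: Let p_L > 0, p_H > 0 be reals with p_L + p_H = 1, let t_min ≥ 0 and τ ≥ t_min be reals, let f_L : ℝ → ℝ be monotone nondecreasing and f_H : ℝ → ℝ be strictly decreasing, and define t_max = (τ − p_H·t_min)/p_L. Then for every pair (t_L, t_H) with t_L ≥ t_min, t_H > t_min, and p_L·t_L + p_H·t_H = τ, one has p_L·f_L(t_L) + p_H·f_H(t_H) < p_L·f_L(t_max) + p_H·f_H(t_min). -/
import Mathlib

/-- Uniqueness of the optimal two-level allocation under strict monotonicity: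
if `fH` is strictly decreasing, any feasible pair `(tL, tH)` with `tH > tmin`
is strictly worse than the confidence-based allocation `(tmax, tmin)`. -/
theorem confidence_based_allocation_unique_optimal
    (pL pH tmin τ : ℝ) (fL fH : ℝ → ℝ)
    (hpL : 0 < pL) (hpH : 0 < pH) (hsum : pL + pH = 1)
    (htmin : 0 ≤ tmin) (hτ : tmin ≤ τ)
    (hfL : Monotone fL) (hfH : StrictAnti fH) :
    ∀ tL tH : ℝ, tmin ≤ tL → tmin < tH → pL * tL + pH * tH = τ →
      pL * fL tL + pH * fH tH <
        pL * fL ((τ - pH * tmin) / pL) + pH * fH tmin := by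
  intro tL tH h1 h2 h3
  have hle : tL ≤ (τ - pH * tmin) / pL := by
    rw [le_div_iff₀ hpL]
    nlinarith
  have h4 : fH tH < fH tmin := hfH h2
  have h5 : fL tL ≤ fL ((τ - pH * tmin) / pL) := hfL hle
  nlinarith
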